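/- Let C be an additive category with split idempotents (a pseudo-abelian category), and let R : C → D be an additive functor into an additive category D such that: (i) for every object H of C, if R(H) ≅ 0 then H ≅ 0, and (ii) every endomorphism of an object of C whose image under R is an isomorphism is itself an isomorphism. Then for all objects X, Y of C and morphisms f : X → Y and g : Y → X, if both R(f) and R(g) are isomorphisms, then f and g are isomorphisms. -/
import Mathlib

open CategoryTheory CategoryTheory.Limits

/-- If an additive functor `R` from an idempotent-complete additive category reflects
zero objects and detects isomorphisms among endomorphisms, then two morphisms
`f : X ⟶ Y`, `g : Y ⟶ X` whose images under `R` are isomorphisms are isomorphisms. -/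
theorem stmt1 {C D : Type*} [Category C] [Category D] [Preadditive C] [Preadditive D]
    [IsIdempotentComplete C]
    (R : C ⥤ D) [R.Additive]
    (hzero : ∀ H : C, IsZero (R.obj H) → IsZero H)
    (hendo : ∀ (X : C) (φ : X ⟶ X), IsIso (R.map φ) → IsIso φ)
    (X Y : C) (f : X ⟶ Y) (g : Y ⟶ X)
    (hf : IsIso (R.map f)) (hg : IsIso (R.map g)) :
    IsIso f ∧ IsIso g := by
  have h1 : IsIso (f ≫ g) := hendo X (f ≫ g) (by rw [R.map_comp]; infer_instance)
  have h2 : IsIso (g ≫ f) := hendo Y (g ≫ f) (by rw [R.map_comp]; infer_instance)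
  constructor
  · exact ⟨g ≫ inv (f ≫ g), by rw [← Category.assoc, IsIso.hom_inv_id], by
      have : inv (g ≫ f) ≫ g ≫ f = 𝟙 Y := IsIso.inv_hom_id _
      calc (g ≫ inv (f ≫ g)) ≫ f
          = inv (g ≫ f) ≫ ((g ≫ f) ≫ g ≫ inv (f ≫ g)) ≫ f := by simp
        _ = inv (g ≫ f) ≫ (g ≫ (f ≫ g) ≫ inv (f ≫ g)) ≫ f := by simp only [Category.assoc]
        _ = 𝟙 Y := by simp⟩
  · exact ⟨f ≫ inv (g ≫ f), by rw [← Category.assoc, IsIso.hom_inv_id], by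
      calc (f ≫ inv (g ≫ f)) ≫ g
          = inv (f ≫ g) ≫ ((f ≫ g) ≫ f ≫ inv (g ≫ f)) ≫ g := by simp
        _ = inv (f ≫ g) ≫ (f ≫ (g ≫ f) ≫ inv (g ≫ f)) ≫ g := by simp only [Category.assoc]
        _ = 𝟙 X := by simp⟩
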